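/- Let r ≥ 1 and let V̂ : ℤ³ → ℝ satisfy V̂(k) = 0 for |k| > r, V̂(−k) = V̂(k), and V̂(0) = 0. There exists a constant C > 0, depending only on r and ∑_{k∈ℤ³} V̂(k)², such that for every p_F ≥ 1 and every bounded function f : ℤ³ → ℝ, sup_{q∈ℤ³} |𝓑[f](q)| ≤ C·p_F·(sup_{p∈ℤ³}|f(p)|)·(sup_{p∈ℤ³}|1 − f(p)|). -/

import Mathlib

open Real

/-- The Euclidean norm of a lattice point in `ℤ^d`. -/
noncomputable def zNorm {d : ℕ} (p : Fin d → ℤ) : ℝ := Real.sqrt (∑ i, ((p i : ℝ)) ^ 2)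

/-- The indicator `χ` of the Fermi ball of radius `p_F`. -/
noncomputable def chi {d : ℕ} (pF : ℝ) (p : Fin d → ℤ) : ℝ := if zNorm p ≤ pF then 1 else 0

/-- The indicator `χ^⊥ = 1 − χ` of the complement of the Fermi ball. -/
noncomputable def chiP {d : ℕ} (pF : ℝ) (p : Fin d → ℤ) : ℝ := 1 - chi pF p

/-- The limiting coefficient `α^H(h,k)` for holes. -/
noncomputable def alphaH (pF : ℝ) (h k : Fin 3 → ℤ) : ℝ :=
  (1 / (2 * π)) * chi pF h * chi pF (h + k) * ((2 * π) ^ 3)⁻¹ *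
    ∑' r : Fin 3 → ℤ, chi pF r * chiP pF (r + k) *
      (if (∑ i, r i * k i) = ∑ i, h i * k i then 1 else 0)

/-- The limiting coefficient `α^P(p,k)` for particles. -/
noncomputable def alphaP (pF : ℝ) (p k : Fin 3 → ℤ) : ℝ :=
  (1 / (2 * π)) * chiP pF p * chiP pF (p - k) * ((2 * π) ^ 3)⁻¹ *
    ∑' r : Fin 3 → ℤ, chi pF r * chiP pF (r + k) *
      (if (∑ i, r i * k i) = ∑ i, (p i - k i) * k i then 1 else 0)

/-- The limiting bosonized-interaction operator `𝓑`. -/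
noncomputable def Bop (pF : ℝ) (Vh f : (Fin 3 → ℤ) → ℝ) (q : Fin 3 → ℤ) : ℝ :=
  2 * π * ((2 * π) ^ 3)⁻¹ * ∑' k : Fin 3 → ℤ, (Vh k) ^ 2 *
    (alphaH pF (q - k) k * f (q - k) * (1 - f q)
      - alphaH pF q k * f q * (1 - f (q + k))
      + alphaP pF (q + k) k * f (q + k) * (1 - f q)
      - alphaP pF q k * f q * (1 - f (q - k)))

/-!
Each coefficient `α^H(h,k)`, `α^P(p,k)` is at most the number of lattice points `r` with
`|r| ≤ p_F < |r + k|` on the plane `r·k = c`. Since `|r + k|² = |r|² + 2c + |k|²`, these points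
lie in the shell `p_F² − 2c − |k|² < |r|² ≤ p_F²`. The unit cubes at these points are disjoint
and lie in a slab of width `4` around the plane, intersected with a slightly thickened shell;
rotating the plane to a coordinate plane turns this region into a subset of a cylinder over a
planar annulus of area `O(|k| p_F + |k|²)`. Hence `|α| = O(|k|² p_F)`, and summing against
`V̂(k)²` over `|k| ≤ r` gives `|𝓑[f](q)| ≤ C r² p_F (∑ V̂²) sup|f| sup|1 − f|`.
-/

open MeasureTheory Metric
open scoped ENNReal RealInnerProductSpace

lemma abs_apply_le_zNorm {d : ℕ} (p : Fin d → ℤ) (i : Fin d) : |(p i : ℝ)| ≤ zNorm p := by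
  rw [← Real.sqrt_sq_eq_abs, zNorm]
  exact Real.sqrt_le_sqrt (Finset.single_le_sum (f := fun j => (p j : ℝ) ^ 2)
    (fun j _ => sq_nonneg _) (Finset.mem_univ i))

lemma one_le_zNorm {d : ℕ} {p : Fin d → ℤ} (hp : p ≠ 0) : 1 ≤ zNorm p := by
  obtain ⟨i, hi⟩ := Function.ne_iff.mp hp
  have : (1 : ℝ) ≤ |(p i : ℝ)| := by exact_mod_cast Int.one_le_abs hi
  exact this.trans (abs_apply_le_zNorm p i)

lemma finite_setOf_zNorm_le (d : ℕ) (R : ℝ) : {p : Fin d → ℤ | zNorm p ≤ R}.Finite := by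
  refine (isCompact_closedBall (0 : Fin d → ℤ) R).finite_of_discrete.subset fun p hp => ?_
  have hR : 0 ≤ R := (Real.sqrt_nonneg _).trans hp
  rw [mem_closedBall_zero_iff, pi_norm_le_iff_of_nonneg hR]
  intro i
  rw [Int.norm_eq_abs]
  exact (abs_apply_le_zNorm p i).trans hp

lemma chi_mem_Icc {d : ℕ} (pF : ℝ) (p : Fin d → ℤ) : chi pF p ∈ Set.Icc (0 : ℝ) 1 := by
  unfold chi; split_ifs <;> simp

lemma chiP_mem_Icc {d : ℕ} (pF : ℝ) (p : Fin d → ℤ) : chiP pF p ∈ Set.Icc (0 : ℝ) 1 := by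
  unfold chiP chi; split_ifs <;> simp

def ofIntVec {d : ℕ} (p : Fin d → ℤ) : EuclideanSpace ℝ (Fin d) :=
  WithLp.toLp 2 fun i => (p i : ℝ)

@[simp] lemma ofIntVec_apply {d : ℕ} (p : Fin d → ℤ) (i : Fin d) :
    ofIntVec p i = p i := rfl

lemma norm_ofIntVec {d : ℕ} (p : Fin d → ℤ) : ‖ofIntVec p‖ = zNorm p := by
  simp [EuclideanSpace.norm_eq, zNorm]

lemma ofIntVec_add {d : ℕ} (p q : Fin d → ℤ) :
    ofIntVec (p + q) = ofIntVec p + ofIntVec q := by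
  ext i; simp

lemma norm_inv_zNorm_smul_ofIntVec {d : ℕ} {k : Fin d → ℤ} (hk : k ≠ 0) :
    ‖(zNorm k)⁻¹ • ofIntVec k‖ = 1 := by
  have hK : 0 < zNorm k := zero_lt_one.trans_le (one_le_zNorm hk)
  rw [norm_smul, norm_ofIntVec, norm_inv, Real.norm_of_nonneg hK.le, inv_mul_cancel₀ hK.ne']

lemma inner_ofIntVec {d : ℕ} (p q : Fin d → ℤ) :
    ⟪ofIntVec p, ofIntVec q⟫ = ((∑ i, p i * q i : ℤ) : ℝ) := by
  simp [PiLp.inner_apply, mul_comm]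

def unitCube {d : ℕ} (p : Fin d → ℤ) : Set (EuclideanSpace ℝ (Fin d)) :=
  WithLp.ofLp ⁻¹' Set.univ.pi fun i => Set.Ico (p i : ℝ) (p i + 1)

lemma measurableSet_unitCube {d : ℕ} (p : Fin d → ℤ) : MeasurableSet (unitCube p) :=
  WithLp.measurable_ofLp _ _ (MeasurableSet.univ_pi fun _ => measurableSet_Ico)

lemma volume_unitCube {d : ℕ} (p : Fin d → ℤ) : volume (unitCube p) = 1 := by
  rw [unitCube, (PiLp.volume_preserving_ofLp (Fin d)).measure_preimage
    (MeasurableSet.univ_pi fun _ => measurableSet_Ico).nullMeasurableSet]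
  simp [volume_pi_pi]

lemma pairwise_disjoint_unitCube (d : ℕ) :
    Pairwise (Function.onFun Disjoint (unitCube (d := d))) := by
  intro p q hpq
  refine Set.disjoint_left.mpr fun x hxp hxq => hpq (funext fun i => ?_)
  rw [← Int.floor_eq_iff.mpr (hxp i (Set.mem_univ i)),
    Int.floor_eq_iff.mpr (hxq i (Set.mem_univ i))]

lemma norm_sub_ofIntVec_le {d : ℕ} {p : Fin d → ℤ} {x : EuclideanSpace ℝ (Fin d)}
    (hx : x ∈ unitCube p) : ‖x - ofIntVec p‖ ≤ √d := by
  rw [EuclideanSpace.norm_eq]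
  refine Real.sqrt_le_sqrt ?_
  calc ∑ i, ‖(x - ofIntVec p) i‖ ^ 2 ≤ ∑ _i : Fin d, (1 : ℝ) := by
        refine Finset.sum_le_sum fun i _ => ?_
        obtain ⟨h₁, h₂⟩ := hx i (Set.mem_univ i)
        rw [Real.norm_eq_abs, sq_abs]
        simp only [PiLp.sub_apply, ofIntVec_apply]
        nlinarith
    _ = d := by simp

lemma card_le_volume_of_unitCube_subset {d : ℕ} (s : Finset (Fin d → ℤ))
    {S : Set (EuclideanSpace ℝ (Fin d))} (hS : ∀ p ∈ s, unitCube p ⊆ S) :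
    (s.card : ℝ≥0∞) ≤ volume S := by
  calc (s.card : ℝ≥0∞) = volume (⋃ p ∈ s, unitCube p) := by
        rw [measure_biUnion_finset ((pairwise_disjoint_unitCube d).set_pairwise _)
          fun p _ => measurableSet_unitCube p]
        simp [volume_unitCube]
    _ ≤ volume S := measure_mono (Set.iUnion₂_subset hS)

lemma volume_annulus_le (a b : ℝ) :
    volume {z : EuclideanSpace ℝ (Fin 2) | a ≤ ‖z‖ ^ 2 ∧ ‖z‖ ^ 2 ≤ b} ≤
      ENNReal.ofReal (π * (b - a)) := by
  rcases lt_or_ge b a with hba | hab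
  · have hempty : {z : EuclideanSpace ℝ (Fin 2) | a ≤ ‖z‖ ^ 2 ∧ ‖z‖ ^ 2 ≤ b} = ∅ :=
      Set.eq_empty_of_forall_notMem fun z hz => by linarith [hz.1, hz.2]
    simp [hempty]
  have hsub : {z : EuclideanSpace ℝ (Fin 2) | a ≤ ‖z‖ ^ 2 ∧ ‖z‖ ^ 2 ≤ b} ⊆
      closedBall 0 √b \ ball 0 √a := by
    rintro z ⟨hza, hzb⟩
    simp only [Set.mem_sdiff, mem_closedBall, mem_ball, dist_zero_right, not_lt]
    exact ⟨Real.le_sqrt_of_sq_le hzb, by simpa using Real.sqrt_le_sqrt hza⟩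
  calc volume {z : EuclideanSpace ℝ (Fin 2) | a ≤ ‖z‖ ^ 2 ∧ ‖z‖ ^ 2 ≤ b}
      ≤ volume (closedBall (0 : EuclideanSpace ℝ (Fin 2)) √b \ ball 0 √a) := measure_mono hsub
    _ = volume (closedBall (0 : EuclideanSpace ℝ (Fin 2)) √b) - volume (ball 0 √a) :=
      measure_sdiff
        (ball_subset_closedBall.trans (closedBall_subset_closedBall (Real.sqrt_le_sqrt hab)))
        measurableSet_ball.nullMeasurableSet measure_ball_lt_top.ne
    _ = ENNReal.ofReal (π * max b 0 - π * max a 0) := by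
      rw [EuclideanSpace.volume_closedBall_fin_two, EuclideanSpace.volume_ball_fin_two,
        ← ENNReal.ofReal_pow (Real.sqrt_nonneg _), ← ENNReal.ofReal_pow (Real.sqrt_nonneg _),
        ← ENNReal.ofReal_mul (by positivity), ← ENNReal.ofReal_mul (by positivity),
        ← ENNReal.ofReal_sub _ (by positivity), Real.sq_sqrt', Real.sq_sqrt', mul_comm _ π,
        mul_comm _ π]
    _ ≤ ENNReal.ofReal (π * (b - a)) := by
      rw [← mul_sub]
      refine ENNReal.ofReal_le_ofReal (mul_le_mul_of_nonneg_left ?_ pi_pos.le)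
      rcases le_total a 0 with h | h <;> rcases le_total b 0 with h' | h' <;>
        simp only [max_eq_left, max_eq_right, *] <;> linarith

lemma volume_cylinder_eq (t δ a b : ℝ) :
    volume {y : EuclideanSpace ℝ (Fin 3) |
        |y 0 - t| ≤ δ ∧ a ≤ y 1 ^ 2 + y 2 ^ 2 ∧ y 1 ^ 2 + y 2 ^ 2 ≤ b} =
      ENNReal.ofReal (2 * δ) *
        volume {z : EuclideanSpace ℝ (Fin 2) | a ≤ ‖z‖ ^ 2 ∧ ‖z‖ ^ 2 ≤ b} := by
  have hannulus : {z : Fin 2 → ℝ | a ≤ z 0 ^ 2 + z 1 ^ 2 ∧ z 0 ^ 2 + z 1 ^ 2 ≤ b} =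
      MeasurableEquiv.toLp 2 (Fin 2 → ℝ) ⁻¹'
        {z : EuclideanSpace ℝ (Fin 2) | a ≤ ‖z‖ ^ 2 ∧ ‖z‖ ^ 2 ≤ b} := by
    ext z
    simp [EuclideanSpace.norm_sq_eq, Fin.sum_univ_two]
  have hcyl : {y : EuclideanSpace ℝ (Fin 3) |
        |y 0 - t| ≤ δ ∧ a ≤ y 1 ^ 2 + y 2 ^ 2 ∧ y 1 ^ 2 + y 2 ^ 2 ≤ b} =
      (MeasurableEquiv.toLp 2 (Fin 3 → ℝ)).symm ⁻¹'
        (MeasurableEquiv.piFinSuccAbove (fun _ => ℝ) 0 ⁻¹'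
          (closedBall t δ ×ˢ
            {z : Fin 2 → ℝ | a ≤ z 0 ^ 2 + z 1 ^ 2 ∧ z 0 ^ 2 + z 1 ^ 2 ≤ b})) := by
    ext y
    simp [Real.dist_eq, Fin.tail]
  rw [hcyl,
    (EuclideanSpace.volume_preserving_symm_measurableEquiv_toLp (Fin 3)).measure_preimage_equiv,
    (volume_preserving_piFinSuccAbove (fun _ => ℝ) 0).measure_preimage_equiv,
    Measure.volume_eq_prod, Measure.prod_prod, Real.volume_closedBall, hannulus,
    MeasurePreserving.measure_preimage_equiv (f := MeasurableEquiv.toLp 2 (Fin 2 → ℝ))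
      (PiLp.volume_preserving_toLp (Fin 2))]

lemma exists_orthonormalBasis_apply_zero_eq {u : EuclideanSpace ℝ (Fin 3)} (hu : ‖u‖ = 1) :
    ∃ o : OrthonormalBasis (Fin 3) ℝ (EuclideanSpace ℝ (Fin 3)), o 0 = u := by
  obtain ⟨o, ho⟩ := Orthonormal.exists_orthonormalBasis_extension_of_card_eq (𝕜 := ℝ)
    (v := fun _ : Fin 3 => u) (s := {0}) (by simp)
    ⟨fun _ => by simpa using hu, fun i j hij => absurd (Subsingleton.elim i j) hij⟩
  exact ⟨o, ho 0 rfl⟩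

lemma volume_slab_inter_shell_le {u : EuclideanSpace ℝ (Fin 3)} (hu : ‖u‖ = 1)
    {δ : ℝ} (hδ : 0 ≤ δ) (t a b : ℝ) :
    volume {x : EuclideanSpace ℝ (Fin 3) | |⟪u, x⟫ - t| ≤ δ ∧ a ≤ ‖x‖ ^ 2 ∧ ‖x‖ ^ 2 ≤ b} ≤
      ENNReal.ofReal (2 * δ) * ENNReal.ofReal (π * (b - a + 2 * δ * (2 * |t| + δ))) := by
  obtain ⟨o, ho⟩ := exists_orthonormalBasis_apply_zero_eq hu
  set ε := δ * (2 * |t| + δ)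
  have hrot : {x : EuclideanSpace ℝ (Fin 3) | |⟪u, x⟫ - t| ≤ δ ∧ a ≤ ‖x‖ ^ 2 ∧ ‖x‖ ^ 2 ≤ b} =
      o.repr.toMeasurableEquiv ⁻¹' {y | |y 0 - t| ≤ δ ∧ a ≤ ‖y‖ ^ 2 ∧ ‖y‖ ^ 2 ≤ b} := by
    ext x
    simp [← ho, OrthonormalBasis.repr_apply_apply]
  have hcyl : {y : EuclideanSpace ℝ (Fin 3) | |y 0 - t| ≤ δ ∧ a ≤ ‖y‖ ^ 2 ∧ ‖y‖ ^ 2 ≤ b} ⊆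
      {y | |y 0 - t| ≤ δ ∧ a - t ^ 2 - ε ≤ y 1 ^ 2 + y 2 ^ 2 ∧
        y 1 ^ 2 + y 2 ^ 2 ≤ b - t ^ 2 + ε} := by
    rintro y ⟨hyt, hya, hyb⟩
    have hnorm : ‖y‖ ^ 2 = y 0 ^ 2 + (y 1 ^ 2 + y 2 ^ 2) := by
      simp [EuclideanSpace.norm_sq_eq, Fin.sum_univ_three, add_assoc]
    have hsq : |y 0 ^ 2 - t ^ 2| ≤ ε := by
      rw [sq_sub_sq, abs_mul]
      have : |y 0 + t| ≤ 2 * |t| + δ := by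
        calc |y 0 + t| = |(y 0 - t) + 2 * t| := by ring_nf
          _ ≤ |y 0 - t| + |2 * t| := abs_add_le _ _
          _ ≤ 2 * |t| + δ := by rw [abs_mul, abs_two]; linarith
      calc |y 0 + t| * |y 0 - t| ≤ (2 * |t| + δ) * δ :=
            mul_le_mul this hyt (abs_nonneg _) (by positivity)
        _ = ε := mul_comm _ _
    refine ⟨hyt, ?_, ?_⟩ <;> linarith [(abs_le.mp hsq).1, (abs_le.mp hsq).2]
  calc _ = volume {y : EuclideanSpace ℝ (Fin 3) | |y 0 - t| ≤ δ ∧ a ≤ ‖y‖ ^ 2 ∧ ‖y‖ ^ 2 ≤ b} :=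
        by rw [hrot, o.measurePreserving_repr.measure_preimage_equiv]
    _ ≤ _ := measure_mono hcyl
    _ ≤ _ := by
      rw [volume_cylinder_eq]
      gcongr
      refine (volume_annulus_le _ _).trans (le_of_eq ?_)
      congr 2
      ring

def shellSlice (pF : ℝ) (k : Fin 3 → ℤ) (c : ℤ) : Set (Fin 3 → ℤ) :=
  {r | zNorm r ≤ pF ∧ pF < zNorm (r + k) ∧ ∑ i, r i * k i = c}

lemma shellSlice_finite (pF : ℝ) (k : Fin 3 → ℤ) (c : ℤ) : (shellSlice pF k c).Finite :=
  (finite_setOf_zNorm_le 3 pF).subset fun _ hr => hr.1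

lemma tsum_chi_mul_chiP_eq_ncard (pF : ℝ) (k : Fin 3 → ℤ) (c : ℤ) :
    ∑' r : Fin 3 → ℤ, chi pF r * chiP pF (r + k) * (if ∑ i, r i * k i = c then 1 else 0) =
      (shellSlice pF k c).ncard := by
  have hind : ∀ r, chi pF r * chiP pF (r + k) * (if ∑ i, r i * k i = c then 1 else 0) =
      (shellSlice pF k c).indicator (fun _ => (1 : ℝ)) r := by
    intro r
    unfold chiP chi shellSlice Set.indicator
    split_ifs <;> simp_all <;> linarith
  rw [tsum_congr hind, ← tsum_subtype, tsum_const, nsmul_one, Nat.card_coe_set_eq]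

lemma unitCube_subset_of_mem_shellSlice {pF : ℝ} {k r : Fin 3 → ℤ} {c : ℤ} (hk : k ≠ 0)
    (hr : r ∈ shellSlice pF k c) :
    unitCube r ⊆ {x | |⟪(zNorm k)⁻¹ • ofIntVec k, x⟫ - c / zNorm k| ≤ 2 ∧
      pF ^ 2 - 2 * c - zNorm k ^ 2 - 4 * pF ≤ ‖x‖ ^ 2 ∧ ‖x‖ ^ 2 ≤ (pF + 2) ^ 2} := by
  intro x hx
  obtain ⟨hr_in, hr_out, hr_c⟩ := hr
  have hK : 0 < zNorm k := zero_lt_one.trans_le (one_le_zNorm hk)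
  have hxy : ‖x - ofIntVec r‖ ≤ 2 :=
    (norm_sub_ofIntVec_le hx).trans ((Real.sqrt_le_left zero_le_two).mpr (by norm_num))
  have hinner : ⟪ofIntVec r, ofIntVec k⟫ = c := by rw [inner_ofIntVec, hr_c]
  rw [← norm_ofIntVec] at hr_in hr_out
  have hshell : pF ^ 2 - 2 * c - zNorm k ^ 2 < ‖ofIntVec r‖ ^ 2 := by
    rw [ofIntVec_add, ← sq_lt_sq₀ (by linarith [norm_nonneg (ofIntVec r)]) (norm_nonneg _),
      norm_add_sq_real, hinner, norm_ofIntVec k] at hr_out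
    linarith
  have hx_le : ‖x‖ ≤ ‖ofIntVec r‖ + 2 := by
    linarith [norm_sub_norm_le x (ofIntVec r)]
  have hx_ge : ‖ofIntVec r‖ - 2 ≤ ‖x‖ := by
    linarith [norm_sub_norm_le (ofIntVec r) x, norm_sub_rev x (ofIntVec r)]
  refine ⟨?_, ?_, ?_⟩
  · have : c / zNorm k = ⟪(zNorm k)⁻¹ • ofIntVec k, ofIntVec r⟫ := by
      rw [real_inner_smul_left, real_inner_comm, hinner, div_eq_inv_mul]
    rw [this, ← inner_sub_right]
    calc _ ≤ ‖(zNorm k)⁻¹ • ofIntVec k‖ * ‖x - ofIntVec r‖ := abs_real_inner_le_norm _ _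
      _ ≤ 2 := by rw [norm_inv_zNorm_smul_ofIntVec hk, one_mul]; exact hxy
  · have : ‖ofIntVec r‖ ^ 2 - 4 * ‖ofIntVec r‖ ≤ ‖x‖ ^ 2 := by
      rcases le_total 2 ‖ofIntVec r‖ with h | h
      · nlinarith [norm_nonneg x]
      · nlinarith [norm_nonneg x, norm_nonneg (ofIntVec r)]
    nlinarith
  · exact pow_le_pow_left₀ (norm_nonneg x) (by linarith) 2

lemma ncard_shellSlice_le {pF : ℝ} (hpF : 1 ≤ pF) {k : Fin 3 → ℤ} (hk : k ≠ 0) (c : ℤ) :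
    ((shellSlice pF k c).ncard : ℝ) ≤ 500 * zNorm k ^ 2 * pF := by
  rcases (shellSlice pF k c).eq_empty_or_nonempty with hempty | ⟨r₀, hr₀⟩
  · rw [hempty, Set.ncard_empty, Nat.cast_zero]
    positivity
  have hK : 1 ≤ zNorm k := one_le_zNorm hk
  have hK₀ : 0 < zNorm k := by linarith
  have hc : |(c : ℝ)| ≤ pF * zNorm k := by
    have := abs_real_inner_le_norm (ofIntVec r₀) (ofIntVec k)
    rw [inner_ofIntVec, hr₀.2.2, norm_ofIntVec, norm_ofIntVec] at this
    exact this.trans (mul_le_mul_of_nonneg_right hr₀.1 (by linarith))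
  have ht : |(c : ℝ) / zNorm k| ≤ pF := by
    rw [abs_div, abs_of_pos hK₀, div_le_iff₀ hK₀]
    exact hc
  set X := (pF + 2) ^ 2 - (pF ^ 2 - 2 * c - zNorm k ^ 2 - 4 * pF) +
    2 * 2 * (2 * |(c : ℝ) / zNorm k| + 2) with hX_def
  have hcard : ((shellSlice pF k c).ncard : ℝ≥0∞) ≤ ENNReal.ofReal (2 * 2 * (π * X)) := by
    rw [Set.ncard_eq_toFinset_card _ (shellSlice_finite pF k c),
      ENNReal.ofReal_mul (by norm_num)]
    refine (card_le_volume_of_unitCube_subset _ fun r hr => ?_).trans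
      (volume_slab_inter_shell_le (norm_inv_zNorm_smul_ofIntVec hk) zero_le_two _ _ _)
    exact unitCube_subset_of_mem_shellSlice hk ((Set.Finite.mem_toFinset _).mp hr)
  have hX : X ≤ 31 * zNorm k ^ 2 * pF := by
    nlinarith [le_abs_self (c : ℝ), mul_le_mul hK hK zero_le_one hK₀.le,
      mul_le_mul_of_nonneg_left hK (by linarith : (0:ℝ) ≤ pF)]
  have hπX : 2 * 2 * (π * X) ≤ 500 * zNorm k ^ 2 * pF := by
    rcases le_total 0 X with hX₀ | hX₀
    · nlinarith [Real.pi_le_four]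
    · nlinarith [Real.pi_pos]
  simpa using ENNReal.toReal_le_of_le_ofReal (by positivity)
    (hcard.trans (ENNReal.ofReal_le_ofReal hπX))

lemma abs_prefactor_mul_le {a b N : ℝ} (ha : a ∈ Set.Icc (0 : ℝ) 1) (hb : b ∈ Set.Icc (0 : ℝ) 1)
    (hN : 0 ≤ N) : |1 / (2 * π) * a * b * ((2 * π) ^ 3)⁻¹ * N| ≤ N := by
  have h2π : 1 ≤ 2 * π := by linarith [Real.pi_gt_three]
  have hinv : 1 / (2 * π) ≤ 1 := by rw [div_le_one (by linarith)]; exact h2π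
  have hinv₃ : ((2 * π) ^ 3)⁻¹ ≤ 1 := inv_le_one_of_one_le₀ (one_le_pow₀ h2π)
  obtain ⟨ha₀, ha₁⟩ := ha
  obtain ⟨hb₀, hb₁⟩ := hb
  rw [abs_of_nonneg (by positivity)]
  calc 1 / (2 * π) * a * b * ((2 * π) ^ 3)⁻¹ * N ≤ 1 * 1 * 1 * 1 * N := by gcongr
    _ = N := by ring

lemma abs_alphaH_le {pF : ℝ} (hpF : 1 ≤ pF) (h : Fin 3 → ℤ) {k : Fin 3 → ℤ} (hk : k ≠ 0) :
    |alphaH pF h k| ≤ 500 * zNorm k ^ 2 * pF := by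
  rw [alphaH, tsum_chi_mul_chiP_eq_ncard]
  exact (abs_prefactor_mul_le (chi_mem_Icc _ _) (chi_mem_Icc _ _) (Nat.cast_nonneg _)).trans
    (ncard_shellSlice_le hpF hk _)

lemma abs_alphaP_le {pF : ℝ} (hpF : 1 ≤ pF) (p : Fin 3 → ℤ) {k : Fin 3 → ℤ} (hk : k ≠ 0) :
    |alphaP pF p k| ≤ 500 * zNorm k ^ 2 * pF := by
  rw [alphaP, tsum_chi_mul_chiP_eq_ncard]
  exact (abs_prefactor_mul_le (chiP_mem_Icc _ _) (chiP_mem_Icc _ _) (Nat.cast_nonneg _)).trans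
    (ncard_shellSlice_le hpF hk _)

lemma abs_mul_mul_le {a x y A M M' : ℝ} (ha : |a| ≤ A) (hx : |x| ≤ M) (hy : |y| ≤ M') :
    |a * x * y| ≤ A * M * M' := by
  rw [abs_mul, abs_mul]
  have hA : 0 ≤ A := (abs_nonneg a).trans ha
  have hM : 0 ≤ M := (abs_nonneg x).trans hx
  gcongr

lemma abs_sub_add_sub_le (a b c d : ℝ) : |a - b + c - d| ≤ |a| + |b| + |c| + |d| :=
  calc |a - b + c - d| ≤ |a - b + c| + |d| := abs_sub _ _
    _ ≤ |a - b| + |c| + |d| := by gcongr; exact abs_add_le _ _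
    _ ≤ |a| + |b| + |c| + |d| := by gcongr; exact abs_sub _ _

lemma abs_Bop_le {pF R M M' : ℝ} {Vh f : (Fin 3 → ℤ) → ℝ} (hpF : 1 ≤ pF)
    (hsupp : ∀ k, R < zNorm k → Vh k = 0) (h0 : Vh 0 = 0) (hM : ∀ p, |f p| ≤ M)
    (hM' : ∀ p, |1 - f p| ≤ M') (q : Fin 3 → ℤ) :
    |Bop pF Vh f q| ≤ (∑' k, Vh k ^ 2) * (2000 * R ^ 2 * pF * M * M') := by
  have hM₀ : 0 ≤ M := (abs_nonneg _).trans (hM 0)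
  have hM'₀ : 0 ≤ M' := (abs_nonneg _).trans (hM' 0)
  set F : (Fin 3 → ℤ) → ℝ := fun k => Vh k ^ 2 *
    (alphaH pF (q - k) k * f (q - k) * (1 - f q)
      - alphaH pF q k * f q * (1 - f (q + k))
      + alphaP pF (q + k) k * f (q + k) * (1 - f q)
      - alphaP pF q k * f q * (1 - f (q - k)))
  have hF : ∀ k, |F k| ≤ Vh k ^ 2 * (2000 * R ^ 2 * pF * M * M') := by
    intro k
    rcases eq_or_ne (Vh k) 0 with hv | hv
    · simp [F, hv]
    have hk : k ≠ 0 := by rintro rfl; exact hv h0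
    have hkR : 500 * zNorm k ^ 2 * pF ≤ 500 * R ^ 2 * pF := by
      have := not_lt.mp (mt (hsupp k) hv)
      gcongr
      exact (Real.sqrt_nonneg _)
    simp only [F, abs_mul (Vh k ^ 2), abs_of_nonneg (sq_nonneg (Vh k))]
    refine mul_le_mul_of_nonneg_left ((abs_sub_add_sub_le _ _ _ _).trans ?_) (sq_nonneg _)
    have t₁ := abs_mul_mul_le ((abs_alphaH_le hpF (q - k) hk).trans hkR) (hM (q - k)) (hM' q)
    have t₂ := abs_mul_mul_le ((abs_alphaH_le hpF q hk).trans hkR) (hM q) (hM' (q + k))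
    have t₃ := abs_mul_mul_le ((abs_alphaP_le hpF (q + k) hk).trans hkR) (hM (q + k)) (hM' q)
    have t₄ := abs_mul_mul_le ((abs_alphaP_le hpF q hk).trans hkR) (hM q) (hM' (q - k))
    linarith
  have hVh : Summable fun k => Vh k ^ 2 := summable_of_hasFiniteSupport <|
    (finite_setOf_zNorm_le 3 R).subset fun k hk =>
      show zNorm k ≤ R from not_lt.mp fun h => hk (by simp [hsupp k h])
  have hFs : Summable fun k => |F k| :=
    Summable.of_nonneg_of_le (fun k => abs_nonneg _) hF (hVh.mul_right _)
  have hpre : 2 * π * ((2 * π) ^ 3)⁻¹ ≤ 1 := by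
    rw [pow_succ', mul_inv, ← mul_assoc, mul_inv_cancel₀ (by positivity), one_mul]
    exact inv_le_one_of_one_le₀ (one_le_pow₀ (by linarith [Real.pi_gt_three]))
  calc |Bop pF Vh f q| = 2 * π * ((2 * π) ^ 3)⁻¹ * |∑' k, F k| := by
        rw [Bop, abs_mul, abs_of_pos (by positivity)]
    _ ≤ 1 * ∑' k, |F k| := by
        have hsum : |∑' k, F k| ≤ ∑' k, |F k| := by
          simpa only [Real.norm_eq_abs] using
            norm_tsum_le_tsum_norm (f := F) (by simpa only [Real.norm_eq_abs] using hFs)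
        exact mul_le_mul hpre hsum (abs_nonneg _) zero_le_one
    _ ≤ ∑' k, Vh k ^ 2 * (2000 * R ^ 2 * pF * M * M') := by
        rw [one_mul]
        exact Summable.tsum_le_tsum hF hFs (hVh.mul_right _)
    _ = _ := tsum_mul_right

/-- Upper bound for `𝓑`: for `r ≥ 1` and `V̂` compactly supported in the ball of radius `r`,
even, with `V̂(0) = 0`, there is `C > 0` depending only on `r` and `∑ V̂(k)²` such that for
every `p_F ≥ 1` and every bounded `f : ℤ³ → ℝ`,
`sup_q |𝓑[f](q)| ≤ C·p_F·(sup|f|)·(sup|1 − f|)`. -/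
theorem stmt8 (r S : ℝ) (hr : 1 ≤ r) :
    ∃ C : ℝ, 0 < C ∧ ∀ Vh : (Fin 3 → ℤ) → ℝ,
      (∀ k, r < zNorm k → Vh k = 0) → (∀ k, Vh (-k) = Vh k) → Vh 0 = 0 →
      (∑' k : Fin 3 → ℤ, (Vh k) ^ 2) ≤ S →
      ∀ pF : ℝ, 1 ≤ pF → ∀ f : (Fin 3 → ℤ) → ℝ, (∃ M, ∀ p, |f p| ≤ M) →
        ∀ q : Fin 3 → ℤ,
          |Bop pF Vh f q| ≤ C * pF * (⨆ p, |f p|) * (⨆ p, |1 - f p|) := by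
  have hr₀ : 0 < r := by linarith
  refine ⟨2000 * r ^ 2 * (|S| + 1), by positivity, ?_⟩
  intro Vh hsupp _ h0 hS pF hpF f ⟨M₀, hM₀⟩ q
  have hM : ∀ p, |f p| ≤ ⨆ p, |f p| := le_ciSup ⟨M₀, Set.forall_mem_range.mpr hM₀⟩
  have hM' : ∀ p, |1 - f p| ≤ ⨆ p, |1 - f p| := le_ciSup ⟨1 + M₀, Set.forall_mem_range.mpr
    fun p => (abs_sub 1 (f p)).trans (by rw [abs_one]; linarith [hM₀ p])⟩
  have hX : 0 ≤ 2000 * r ^ 2 * pF * (⨆ p, |f p|) * (⨆ p, |1 - f p|) := by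
    have := (abs_nonneg _).trans (hM 0)
    have := (abs_nonneg _).trans (hM' 0)
    positivity
  calc |Bop pF Vh f q|
      ≤ (∑' k, Vh k ^ 2) * (2000 * r ^ 2 * pF * (⨆ p, |f p|) * (⨆ p, |1 - f p|)) :=
        abs_Bop_le hpF hsupp h0 hM hM' q
    _ ≤ (|S| + 1) * (2000 * r ^ 2 * pF * (⨆ p, |f p|) * (⨆ p, |1 - f p|)) :=
        mul_le_mul_of_nonneg_right (hS.trans (by linarith [le_abs_self S])) hX
    _ = 2000 * r ^ 2 * (|S| + 1) * pF * (⨆ p, |f p|) * (⨆ p, |1 - f p|) := by ring
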